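/- arXiv:1606.03959 — 2 statements merged into one kernel-verified Lean document; each statement's English description precedes it below -/
import Mathlib

section
/- For s ∈ Δ, let μ_s be the law on Mat(ℕ×m, ℝ) of G·diag(s₁,…,s_m)·O, where G has i.i.d. standard real Gaussian entries and O is an independent Haar-random matrix in O(m). Then for μ_s-almost every X, and every k ∈ ℕ, lim_{n→∞} tr([(1/n)·C_n(X)ᵀ C_n(X)]^k) = ∑_{i=1}^m s_i^{2k}. -/
open MeasureTheory ProbabilityTheory Filter Finset Matrix

/-- Matrices over a measurable space carry the product measurable structure. -/
noncomputable instance matrixMeasurableSpace {l n α : Type*} [MeasurableSpace α] :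
    MeasurableSpace (Matrix l n α) :=
  show MeasurableSpace (l → n → α) from inferInstance

/-!
Write `C_n(G)` for the upper `n × m` corner of `G`. Its rows are i.i.d. standard Gaussian vectors,
so the strong law of large numbers, applied to each entry, gives `(1/n) C_n(G)ᵀ C_n(G) → 1`
almost surely. Since `C_n(X) = C_n(G) diag(s) O`, the matrix `(1/n) C_n(X)ᵀ C_n(X)` is the
conjugate by the orthogonal matrix `O` of `diag(s) (1/n) C_n(G)ᵀ C_n(G) diag(s) → diag(s²)`,
so the trace of its `k`-th power tends to `tr diag(s^{2k})` for every realisation of `O`.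
-/

open Topology

lemma ProbabilityTheory.HasLaw.integrable_comp {Ω 𝓧 E : Type*} {mΩ : MeasurableSpace Ω}
    {m𝓧 : MeasurableSpace 𝓧} [NormedAddCommGroup E] {X : Ω → 𝓧} {μ : Measure 𝓧} {P : Measure Ω}
    (hX : HasLaw X μ P) {f : 𝓧 → E} (hf : Integrable f μ) : Integrable (fun ω => f (X ω)) P := by
  rw [← hX.map_eq] at hf
  exact hf.comp_aemeasurable hX.aemeasurable

lemma ProbabilityTheory.integral_sq_gaussianReal_zero (v : NNReal) :
    ∫ x, x ^ 2 ∂gaussianReal 0 v = v := by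
  rw [← variance_of_integral_eq_zero aemeasurable_id' integral_id_gaussianReal,
    variance_fun_id_gaussianReal]

/-- If `f` is not a.e.-measurable, `μ.map f = 0` and the claim is vacuous. -/
lemma MeasureTheory.ae_map_of_ae_comp {α β : Type*} [MeasurableSpace α] [MeasurableSpace β]
    {μ : Measure α} {f : α → β} {p : β → Prop} (hp : Measurable p) (h : ∀ᵐ x ∂μ, p (f x)) :
    ∀ᵐ y ∂μ.map f, p y := by
  by_cases hf : AEMeasurable f μ
  · exact (ae_map_iff hf (measurableSet_setOfPred.2 hp)).2 h
  · simp [Measure.map_of_not_aemeasurable hf]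

namespace Matrix

variable {ι R : Type*}

def corner (n : ℕ) (X : ℕ → ι → R) : Matrix (Fin n) ι R :=
  Matrix.of fun l j => X l j

noncomputable def sampleGram [Fintype ι] (n : ℕ) (X : ℕ → ι → ℝ) : Matrix ι ι ℝ :=
  (n : ℝ)⁻¹ • ((corner n X)ᵀ * corner n X)

variable [Fintype ι]

lemma sampleGram_apply (n : ℕ) (X : ℕ → ι → ℝ) (a b : ι) :
    sampleGram n X a b = (∑ l ∈ range n, X l a * X l b) / n := by
  simp [sampleGram, corner, mul_apply, Fin.sum_univ_eq_sum_range (fun l => X l a * X l b),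
    div_eq_inv_mul]

lemma continuous_sampleGram (n : ℕ) :
    Continuous (sampleGram n : (ℕ → ι → ℝ) → Matrix ι ι ℝ) := by
  unfold sampleGram corner
  fun_prop

variable [DecidableEq ι]

lemma sampleGram_mul_diagonal_mul (n : ℕ) (G : ℕ → ι → ℝ) (s : ι → ℝ) (U : Matrix ι ι ℝ) :
    sampleGram n (fun i j => ∑ l, G i l * s l * U l j) =
      Uᵀ * (diagonal s * sampleGram n G * diagonal s) * U := by
  have hcorner : corner n (fun i j => ∑ l, G i l * s l * U l j) = corner n G * diagonal s * U := by
    ext l j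
    rw [mul_apply]
    simp [corner, mul_diagonal]
  simp [sampleGram, hcorner, transpose_mul, Matrix.mul_assoc]

lemma trace_pow_transpose_mul_mul_of_mem_orthogonalGroup {U : Matrix ι ι ℝ}
    (hU : U ∈ orthogonalGroup ι ℝ) (M : Matrix ι ι ℝ) (k : ℕ) :
    trace ((Uᵀ * M * U) ^ k) = trace (M ^ k) := by
  obtain ⟨u, rfl, hu⟩ : ∃ u : (Matrix ι ι ℝ)ˣ, ↑u = U ∧ ↑u⁻¹ = Uᵀ :=
    ⟨Unitary.toUnits ⟨U, hU⟩, rfl, by simp [star_eq_conjTranspose]⟩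
  rw [← hu, Units.conj_pow', trace_units_conj']

lemma tendsto_trace_pow_sampleGram_mul_diagonal_mul {G : ℕ → ι → ℝ}
    (hG : Tendsto (sampleGram · G) atTop (𝓝 1)) (s : ι → ℝ) {U : Matrix ι ι ℝ}
    (hU : U ∈ orthogonalGroup ι ℝ) (k : ℕ) :
    Tendsto (fun n => trace (sampleGram n (fun i j => ∑ l, G i l * s l * U l j) ^ k)) atTop
      (𝓝 (∑ i, s i ^ (2 * k))) := by
  simp_rw [sampleGram_mul_diagonal_mul, trace_pow_transpose_mul_mul_of_mem_orthogonalGroup hU]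
  have hconj : Tendsto (fun n => diagonal s * sampleGram n G * diagonal s) atTop
      (𝓝 (diagonal s * 1 * diagonal s)) :=
    (tendsto_const_nhds.mul hG).mul tendsto_const_nhds
  have hlimit : trace ((diagonal s * 1 * diagonal s) ^ k) = ∑ i, s i ^ (2 * k) := by
    simp [diagonal_pow, pow_mul, sq]
  rw [← hlimit]
  exact (continuous_id.matrix_trace.tendsto _).comp (hconj.pow k)

end Matrix

section StrongLaw

variable {Ω ι : Type*} [MeasurableSpace Ω] {P : Measure Ω} {μ : Measure ℝ}
  {g : ℕ → ι → Ω → ℝ}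

lemma pairwise_indepFun_mul_of_iIndepFun (hindep : iIndepFun (fun p : ℕ × ι => g p.1 p.2) P)
    (hmeas : ∀ l j, AEMeasurable (g l j) P) (a b : ι) :
    Pairwise fun l l' => (fun ω => g l a ω * g l b ω) ⟂ᵢ[P] (fun ω => g l' a ω * g l' b ω) :=
  fun l l' hl =>
  (hindep.indepFun_prodMk_prodMk₀ (fun p => hmeas p.1 p.2) (l, a) (l, b) (l', a) (l', b)
    (by simp [hl]) (by simp [hl]) (by simp [hl]) (by simp [hl])).comp measurable_mul measurable_mul

lemma ae_tendsto_average_sq (hindep : iIndepFun (fun p : ℕ × ι => g p.1 p.2) P)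
    (hlaw : ∀ l j, HasLaw (g l j) μ P) (hμ : MemLp id 2 μ) (a : ι) :
    ∀ᵐ ω ∂P, Tendsto (fun n : ℕ => (∑ l ∈ range n, g l a ω * g l a ω) / n) atTop
      (𝓝 (∫ x, x ^ 2 ∂μ)) := by
  have hsq : ∀ l, HasLaw (fun ω => g l a ω * g l a ω) (μ.map fun x => x * x) P :=
    fun l => (⟨by fun_prop, rfl⟩ : HasLaw (fun x : ℝ => x * x) _ μ).comp (hlaw l a)
  have h := strong_law_ae_real (fun l ω => g l a ω * g l a ω)
    (by simpa only [← sq] using (hlaw 0 a).integrable_comp (f := fun x => x ^ 2) hμ.integrable_sq)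
    (pairwise_indepFun_mul_of_iIndepFun hindep (fun l j => (hlaw l j).aemeasurable) a a)
    fun l => (hsq l).identDistrib (hsq 0)
  have hmean : ∫ ω, g 0 a ω * g 0 a ω ∂P = ∫ x, x ^ 2 ∂μ := by
    simp_rw [← sq]
    exact (hlaw 0 a).integral_comp (f := fun x => x ^ 2) (by fun_prop)
  rwa [hmean] at h

lemma ae_tendsto_average_mul_of_ne [IsProbabilityMeasure P]
    (hindep : iIndepFun (fun p : ℕ × ι => g p.1 p.2) P)
    (hlaw : ∀ l j, HasLaw (g l j) μ P) (hμ : MemLp id 2 μ) {a b : ι} (hab : a ≠ b) :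
    ∀ᵐ ω ∂P, Tendsto (fun n : ℕ => (∑ l ∈ range n, g l a ω * g l b ω) / n) atTop
      (𝓝 ((∫ x, x ∂μ) ^ 2)) := by
  have : IsProbabilityMeasure μ := (hlaw 0 a).isProbabilityMeasure_iff.1 ‹_›
  have hind : ∀ l, g l a ⟂ᵢ[P] g l b := fun l =>
    hindep.indepFun (i := (l, a)) (j := (l, b)) (by simp [hab])
  have hpair : ∀ l, HasLaw (fun ω => (g l a ω, g l b ω)) (μ.prod μ) P := fun l =>
    (hind l).hasLaw_prod (hlaw l a) (hlaw l b)
  have hint : ∀ j, Integrable (g 0 j) P := fun j =>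
    (hlaw 0 j).integrable_comp (f := id) (hμ.integrable one_le_two)
  have h := strong_law_ae_real (fun l ω => g l a ω * g l b ω)
    ((hind 0).integrable_mul (hint a) (hint b))
    (pairwise_indepFun_mul_of_iIndepFun hindep (fun l j => (hlaw l j).aemeasurable) a b)
    fun l => ((hpair l).identDistrib (hpair 0)).comp measurable_mul
  have hmean : ∫ ω, g 0 a ω * g 0 b ω ∂P = (∫ x, x ∂μ) ^ 2 := by
    rw [(hind 0).integral_fun_mul_eq_mul_integral (hint a).1 (hint b).1, (hlaw 0 a).integral_eq,
      (hlaw 0 b).integral_eq, sq]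
  rwa [hmean] at h

lemma ae_tendsto_sampleGram [IsProbabilityMeasure P] [Fintype ι] [DecidableEq ι]
    (hindep : iIndepFun (fun p : ℕ × ι => g p.1 p.2) P) (hlaw : ∀ l j, HasLaw (g l j) μ P)
    (hμ : MemLp id 2 μ) (hmean : ∫ x, x ∂μ = 0) (hsq : ∫ x, x ^ 2 ∂μ = 1) :
    ∀ᵐ ω ∂P, Tendsto (sampleGram · fun l j => g l j ω) atTop (𝓝 1) := by
  have h : ∀ᵐ ω ∂P, ∀ a b, Tendsto (fun n : ℕ => (∑ l ∈ range n, g l a ω * g l b ω) / n) atTop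
      (𝓝 ((1 : Matrix ι ι ℝ) a b)) := by
    refine ae_all_iff.2 fun a => ae_all_iff.2 fun b => ?_
    rcases eq_or_ne a b with rfl | hab
    · simpa [hsq] using ae_tendsto_average_sq hindep hlaw hμ a
    · simpa [hab, hmean] using ae_tendsto_average_mul_of_ne hindep hlaw hμ hab
  filter_upwards [h] with ω hω
  refine tendsto_pi_nhds.2 fun a => tendsto_pi_nhds.2 fun b => ?_
  simpa only [sampleGram_apply] using hω a b

end StrongLaw

theorem mu_s_ae_trace_limit_general (m : ℕ) {Ω : Type*} [MeasurableSpace Ω] (P : Measure Ω)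
    [IsProbabilityMeasure P] (g : ℕ → Fin m → Ω → ℝ)
    (hindep : iIndepFun (fun p : ℕ × Fin m => g p.1 p.2) P)
    (hdist : ∀ l j, Measure.map (g l j) P = gaussianReal 0 1)
    (O : Ω → Matrix.orthogonalGroup (Fin m) ℝ)
    (s : Fin m → ℝ)
    (μs : Measure (ℕ → Fin m → ℝ))
    (hμs : μs = Measure.map
      (fun ω => fun (i : ℕ) (j : Fin m) =>
        ∑ l : Fin m, g i l ω * s l * (O ω : Matrix (Fin m) (Fin m) ℝ) l j) P) :
    ∀ᵐ X ∂μs, ∀ k : ℕ, 1 ≤ k →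
      Tendsto
        (fun n : ℕ =>
          Matrix.trace
            ((((n : ℝ)⁻¹) •
              ((Matrix.of (fun (l : Fin n) (j : Fin m) => X l j))ᵀ *
                Matrix.of (fun (l : Fin n) (j : Fin m) => X l j))) ^ k))
        atTop (nhds (∑ i, s i ^ (2 * k))) := by
  have hlaw : ∀ l j, HasLaw (g l j) (gaussianReal 0 1) P := fun l j =>
    ⟨aemeasurable_of_map_neZero (by rw [hdist l j]; infer_instance), hdist l j⟩
  have hgram := ae_tendsto_sampleGram hindep hlaw (memLp_id_gaussianReal 2)
    integral_id_gaussianReal (by simpa using integral_sq_gaussianReal_zero 1)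
  rw [hμs]
  -- the statement's matrix is `sampleGram n X` unfolded
  refine ae_map_of_ae_comp (Measurable.forall fun k => measurable_const.imp
    (measurableSet_setOfPred.1 (measurableSet_tendsto _ fun n =>
      ((continuous_sampleGram n).pow k).matrix_trace.measurable))) ?_
  filter_upwards [hgram] with ω hω k _
  exact tendsto_trace_pow_sampleGram_mul_diagonal_mul hω s (O ω).2 k

/-- Let `μ_s` be the law on `Mat(ℕ × m, ℝ)` of `G ⬝ diag(s) ⬝ O`, where `G` has i.i.d.
standard real Gaussian entries and `O` is an independent Haar-random matrix in `O(m)`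
(its law is an invariant probability measure on the orthogonal group). Then for
`μ_s`-almost every `X` and every `k ≥ 1`,
`tr([(1/n) C_n(X)ᵀ C_n(X)]^k) → ∑_{i=1}^m s_i^{2k}` as `n → ∞`. -/
theorem mu_s_ae_trace_limit (m : ℕ) {Ω : Type*} [MeasurableSpace Ω] (P : Measure Ω)
    [IsProbabilityMeasure P] (g : ℕ → Fin m → Ω → ℝ)
    (hindep : iIndepFun (fun p : ℕ × Fin m => g p.1 p.2) P)
    (hdist : ∀ l j, Measure.map (g l j) P = gaussianReal 0 1)
    (O : Ω → Matrix.orthogonalGroup (Fin m) ℝ)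
    (hOindep : IndepFun (fun ω => (fun p : ℕ × Fin m => g p.1 p.2 ω)) O P)
    (hOhaar : ∀ U : Matrix.orthogonalGroup (Fin m) ℝ,
      Measure.map (fun V => U * V) (Measure.map O P) = Measure.map O P)
    (s : Fin m → ℝ) (hs_mono : Antitone s) (hs_nonneg : ∀ i, 0 ≤ s i)
    (μs : Measure (ℕ → Fin m → ℝ))
    (hμs : μs = Measure.map
      (fun ω => fun (i : ℕ) (j : Fin m) =>
        ∑ l : Fin m, g i l ω * s l * (O ω : Matrix (Fin m) (Fin m) ℝ) l j) P) :
    ∀ᵐ X ∂μs, ∀ k : ℕ, 1 ≤ k →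
      Tendsto
        (fun n : ℕ =>
          Matrix.trace
            ((((n : ℝ)⁻¹) •
              ((Matrix.of (fun (l : Fin n) (j : Fin m) => X l j))ᵀ *
                Matrix.of (fun (l : Fin n) (j : Fin m) => X l j))) ^ k))
        atTop (nhds (∑ i, s i ^ (2 * k))) :=
  mu_s_ae_trace_limit_general m P g hindep hdist O s μs hμs
end

section
/- Let (s^{(n)}) be a sequence in Δ and suppose the sequence of measures (μ_{s^{(n)}}) on Mat(ℕ×m,ℝ) converges weakly to some probability measure μ. Then sup_n s₁^{(n)} < ∞. -/
/-!
Test the measures against `X ↦ exp (-‖X₀‖²)`, where `X₀` is the first row of `X`. Since `O` is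
orthogonal, the first row of `G·diag(s)·O` has the same norm as that of `G·diag(s)`, which is at
least `s₁ |G₀₁|`; hence the integral against `μ_s` is at most `𝔼[exp (-s₁² G₀₁²)]`. As `G₀₁ ≠ 0`
almost surely, this tends to `0` when `s₁ → ∞`, while along the sequence it stays above half of
the (positive) integral against `μ`.
-/

open MeasureTheory ProbabilityTheory Filter Finset Matrix

open scoped Topology

lemma vecMul_dotProduct_vecMul_of_mem_orthogonalGroup {ι : Type*} [Fintype ι] [DecidableEq ι]
    {M : Matrix ι ι ℝ} (hM : M ∈ orthogonalGroup ι ℝ) (v : ι → ℝ) :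
    v ᵥ* M ⬝ᵥ v ᵥ* M = v ⬝ᵥ v := by
  rw [mem_orthogonalGroup_iff] at hM
  rw [← dotProduct_mulVec, ← mulVec_transpose, mulVec_mulVec, hM, one_mulVec]

lemma sq_le_dotProduct_self {ι : Type*} [Fintype ι] (v : ι → ℝ) (i : ι) : v i ^ 2 ≤ v ⬝ᵥ v := by
  rw [sq]
  exact single_le_sum (f := fun j => v j * v j) (fun j _ => mul_self_nonneg (v j)) (mem_univ i)

lemma norm_exp_neg_le_one {x : ℝ} (hx : 0 ≤ x) : ‖Real.exp (-x)‖ ≤ 1 := by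
  rwa [Real.norm_of_nonneg (Real.exp_pos _).le, Real.exp_le_one_iff, neg_nonpos]

noncomputable def rowGaussianTest {κ ι : Type*} [Fintype ι] (k : κ) :
    BoundedContinuousFunction (κ → ι → ℝ) ℝ :=
  .ofNormedAddCommGroup (fun X => Real.exp (-(X k ⬝ᵥ X k))) (by fun_prop) 1 fun X =>
    norm_exp_neg_le_one (by simpa using dotProduct_self_star_nonneg (X k))

section

variable {Ω : Type*} [MeasurableSpace Ω] {P : Measure Ω}

lemma integral_map_le_of_comp_le {X : Type*} [MeasurableSpace X] {T : Ω → X} {F : X → ℝ}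
    {h : Ω → ℝ} (hF : AEStronglyMeasurable F (P.map T)) (hF₀ : 0 ≤ F)
    (hle : ∀ ω, F (T ω) ≤ h ω) (hh : Integrable h P) :
    ∫ x, F x ∂P.map T ≤ ∫ ω, h ω ∂P := by
  by_cases hT : AEMeasurable T P
  · rw [integral_map hT hF]
    exact integral_mono_of_nonneg (ae_of_all _ fun ω => hF₀ _) hh (ae_of_all _ hle)
  · rw [Measure.map_of_not_aemeasurable hT, integral_zero_measure]
    exact integral_nonneg fun ω => (hF₀ _).trans (hle ω)

lemma integrable_exp_neg_sq [IsFiniteMeasure P] {Y : Ω → ℝ} (hY : AEMeasurable Y P) :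
    Integrable (fun ω => Real.exp (-Y ω ^ 2)) P :=
  .of_bound (by fun_prop) 1 <| ae_of_all _ fun ω => norm_exp_neg_le_one (sq_nonneg _)

lemma tendsto_integral_exp_neg_sq_mul_atTop [IsFiniteMeasure P] {Y : Ω → ℝ}
    (hY : AEMeasurable Y P) (hY₀ : ∀ᵐ ω ∂P, Y ω ≠ 0) :
    Tendsto (fun c : ℝ => ∫ ω, Real.exp (-(c * Y ω) ^ 2) ∂P) atTop (𝓝 0) := by
  rw [← integral_zero Ω ℝ]
  refine tendsto_integral_filter_of_dominated_convergence (fun _ => 1)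
    (.of_forall fun c => (integrable_exp_neg_sq (hY.const_mul c)).1) ?_ (integrable_const 1) ?_
  · exact .of_forall fun c => ae_of_all _ fun ω => norm_exp_neg_le_one (sq_nonneg _)
  · filter_upwards [hY₀] with ω hω
    have hsq : Tendsto (fun c : ℝ => (c * Y ω) ^ 2) atTop atTop :=
      ((tendsto_pow_atTop two_ne_zero).atTop_mul_const (sq_pos_of_ne_zero hω)).congr
        fun c => (mul_pow c (Y ω) 2).symm
    exact Real.tendsto_exp_neg_atTop_nhds_zero.comp hsq

lemma aemeasurable_of_map_eq_gaussianReal {Y : Ω → ℝ} {m : ℝ} {v : NNReal}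
    (hY : P.map Y = gaussianReal m v) : AEMeasurable Y P :=
  .of_map_ne_zero (by rw [hY]; exact IsProbabilityMeasure.ne_zero _)

lemma ae_ne_of_map_eq_gaussianReal {Y : Ω → ℝ} {m : ℝ} {v : NNReal} (hv : v ≠ 0)
    (hY : P.map Y = gaussianReal m v) (a : ℝ) : ∀ᵐ ω ∂P, Y ω ≠ a := by
  have := nullSingletonClass_gaussianReal (μ := m) hv
  exact ae_of_ae_map (aemeasurable_of_map_eq_gaussianReal hY) (by rw [hY]; exact Measure.ae_ne _ a)

end

lemma bddAbove_range_of_tendsto_zero_of_eventually_le {I : ℝ → ℝ} (hI : Tendsto I atTop (𝓝 0))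
    {c : ℕ → ℝ} {ε : ℝ} (hε : 0 < ε) (hc : ∀ᶠ n in atTop, ε ≤ I (c n)) :
    BddAbove (Set.range c) := by
  obtain ⟨K, hK⟩ := eventually_atTop.1 (hI.eventually (gt_mem_nhds hε))
  refine (isBoundedUnder_of_eventually_le (a := K) ?_).bddAbove_range
  filter_upwards [hc] with n hn
  by_contra! hlt
  exact (hK _ hlt.le).not_ge hn

theorem tightness_forces_bounded_general (m : ℕ) (hm : 0 < m) {Ω : Type*} [MeasurableSpace Ω]
    (P : Measure Ω) [IsProbabilityMeasure P] (g : ℕ → Fin m → Ω → ℝ)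
    (hdist : ∀ l j, Measure.map (g l j) P = gaussianReal 0 1)
    (O : Ω → Matrix.orthogonalGroup (Fin m) ℝ)
    (s : ℕ → Fin m → ℝ)
    (μseq : ℕ → Measure (ℕ → Fin m → ℝ))
    (hμseq : ∀ n, μseq n = Measure.map
      (fun ω => fun (i : ℕ) (j : Fin m) =>
        ∑ l : Fin m, g i l ω * s n l * (O ω : Matrix (Fin m) (Fin m) ℝ) l j) P)
    (μ : Measure (ℕ → Fin m → ℝ)) (hμ : IsProbabilityMeasure μ)
    (hweak : ∀ f : BoundedContinuousFunction (ℕ → Fin m → ℝ) ℝ,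
      Tendsto (fun n => ∫ X, f X ∂(μseq n)) atTop (nhds (∫ X, f X ∂μ))) :
    ∃ B : ℝ, ∀ n, s n ⟨0, hm⟩ ≤ B := by
  set i₀ : Fin m := ⟨0, hm⟩
  set f := rowGaussianTest (ι := Fin m) (0 : ℕ)
  set I : ℝ → ℝ := fun c => ∫ ω, Real.exp (-(c * g 0 i₀ ω) ^ 2) ∂P
  have hY := hdist 0 i₀
  have hYm := aemeasurable_of_map_eq_gaussianReal hY
  have hdecay : Tendsto I atTop (𝓝 0) :=
    tendsto_integral_exp_neg_sq_mul_atTop hYm (ae_ne_of_map_eq_gaussianReal one_ne_zero hY 0)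
  have hupper (n : ℕ) : ∫ X, f X ∂μseq n ≤ I (s n i₀) := by
    rw [hμseq n]
    refine integral_map_le_of_comp_le f.continuous.aestronglyMeasurable
      (fun X => (Real.exp_pos _).le) (fun ω => ?_) (integrable_exp_neg_sq (hYm.const_mul _))
    let v : Fin m → ℝ := fun l => g 0 l ω * s n l
    change Real.exp (-(v ᵥ* (O ω).1 ⬝ᵥ v ᵥ* (O ω).1)) ≤ _
    rw [vecMul_dotProduct_vecMul_of_mem_orthogonalGroup (O ω).2, Real.exp_le_exp,
      neg_le_neg_iff, mul_comm]
    exact sq_le_dotProduct_self v i₀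
  have hlim : 0 < ∫ X, f X ∂μ := integral_exp_pos (f.integrable μ)
  have hlower : ∀ᶠ n in atTop, (∫ X, f X ∂μ) / 2 ≤ I (s n i₀) :=
    ((hweak f).eventually (lt_mem_nhds (half_lt_self hlim))).mono fun n hn =>
      hn.le.trans (hupper n)
  obtain ⟨B, hB⟩ := bddAbove_range_of_tendsto_zero_of_eventually_le hdecay (half_pos hlim) hlower
  exact ⟨B, fun n => hB ⟨n, rfl⟩⟩

/-- If `(s^{(n)})` is a sequence in `Δ` such that the measures `μ_{s^{(n)}}` (laws of
`G·diag(s^{(n)})·O` on `Mat(ℕ × m, ℝ)`, with `G` an i.i.d. standard Gaussian matrix and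
`O` an independent Haar-random orthogonal matrix) converge weakly to some probability
measure `μ`, then `sup_n s₁^{(n)} < ∞`. -/
theorem tightness_forces_bounded (m : ℕ) (hm : 0 < m) {Ω : Type*} [MeasurableSpace Ω]
    (P : Measure Ω) [IsProbabilityMeasure P] (g : ℕ → Fin m → Ω → ℝ)
    (hindep : iIndepFun (fun p : ℕ × Fin m => g p.1 p.2) P)
    (hdist : ∀ l j, Measure.map (g l j) P = gaussianReal 0 1)
    (O : Ω → Matrix.orthogonalGroup (Fin m) ℝ)
    (hOindep : IndepFun (fun ω => (fun p : ℕ × Fin m => g p.1 p.2 ω)) O P)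
    (hOhaar : ∀ U : Matrix.orthogonalGroup (Fin m) ℝ,
      Measure.map (fun V => U * V) (Measure.map O P) = Measure.map O P)
    (s : ℕ → Fin m → ℝ)
    (hs_mono : ∀ n, Antitone (s n)) (hs_nonneg : ∀ n i, 0 ≤ s n i)
    (μseq : ℕ → Measure (ℕ → Fin m → ℝ))
    (hμseq : ∀ n, μseq n = Measure.map
      (fun ω => fun (i : ℕ) (j : Fin m) =>
        ∑ l : Fin m, g i l ω * s n l * (O ω : Matrix (Fin m) (Fin m) ℝ) l j) P)
    (μ : Measure (ℕ → Fin m → ℝ)) (hμ : IsProbabilityMeasure μ)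
    (hweak : ∀ f : BoundedContinuousFunction (ℕ → Fin m → ℝ) ℝ,
      Tendsto (fun n => ∫ X, f X ∂(μseq n)) atTop (nhds (∫ X, f X ∂μ))) :
    ∃ B : ℝ, ∀ n, s n ⟨0, hm⟩ ≤ B :=
  tightness_forces_bounded_general m hm P g hdist O s μseq hμseq μ hμ hweak
end
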